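/- arXiv:1912.05363 — 3 statements merged into one kernel-verified Lean document; each statement's English description precedes it below -/
import Mathlib

section
/- The subring of R_W generated by π^*(R_X) ∪ j_*(R_E) equals the subring of R_W generated by π^*(R_X) ∪ j_*(π_E^*(R_Z)). -/
/-!
Write `S` for the subring generated by `π^*(R_X)` and `j_*(π_E^*(R_Z))`. Since `R_E` is generated
by `π_E^*(R_Z)` and `ζ`, it is spanned additively by the monomials `π_E^*(z) ζ^n`, so it suffices
to see `j_*(π_E^*(z) ζ^n) ∈ S`. The blow-up rule with `δ = 1` reads
`j_*(γ ζ) = -j_*(γ) j_*(1)`, and `j_*(1) = j_*(π_E^*(1)) ∈ S`, so this follows by induction on `n`.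
-/

theorem AddSubgroup.eq_top_of_mul_pow_mem {R A : Type*} [CommRing R] [CommRing A]
    (f : R →+* A) (ζ : A) (hgen : Subring.closure (Set.range f ∪ {ζ}) = ⊤)
    (T : AddSubgroup A) (hT : ∀ r n, f r * ζ ^ n ∈ T) : T = ⊤ := by
  let _ := f.toAlgebra
  have hadjoin : Algebra.adjoin R {ζ} = ⊤ :=
    Subalgebra.toSubring_injective (by rw [Algebra.adjoin_eq_ring_closure]; exact hgen)
  rw [eq_top_iff]
  rintro e -
  obtain ⟨p, rfl⟩ : ∃ p, Polynomial.aeval (R := R) ζ p = e := by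
    rw [← AlgHom.mem_range, ← Algebra.adjoin_singleton_eq_range_aeval, hadjoin]; trivial
  induction p using Polynomial.induction_on' with
  | add p q hp hq => rw [map_add]; exact T.add_mem hp hq
  | monomial n r => rw [Polynomial.aeval_monomial]; exact hT r n

theorem map_mul_pow_mem_of_mul_eq_neg {E W : Type*} [CommRing E] [CommRing W]
    (j : E →+ W) (ζ : E) (hrule : ∀ γ δ : E, j γ * j δ = -j (γ * δ * ζ))
    (S : Subring W) (hone : j 1 ∈ S) {e : E} (he : j e ∈ S) (n : ℕ) : j (e * ζ ^ n) ∈ S := by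
  induction n with
  | zero => simpa using he
  | succ n ih =>
    have hstep : j (e * ζ ^ (n + 1)) = -(j (e * ζ ^ n) * j 1) := by
      rw [hrule, mul_one, pow_succ, mul_assoc, neg_neg]
    rw [hstep]
    exact S.neg_mem (S.mul_mem ih hone)

/-- With the blow-up multiplication rule and `R_E` generated as a ring by
`π_E^*(R_Z)` together with `ζ`, the subring of `R_W` generated by `π^*(R_X) ∪ j_*(R_E)`
equals the subring generated by `π^*(R_X) ∪ j_*(π_E^*(R_Z))`. -/
theorem subring_gen_without_zeta
    {R_X R_Z R_E R_W : Type*} [CommRing R_X] [CommRing R_Z] [CommRing R_E] [CommRing R_W]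
    (π : R_X →+* R_W) (πE : R_Z →+* R_E) (j : R_E →+ R_W) (ζ : R_E)
    (hrule : ∀ γ δ : R_E, j γ * j δ = -j (γ * δ * ζ))
    (hgenE : Subring.closure (Set.range πE ∪ {ζ}) = (⊤ : Subring R_E)) :
    Subring.closure (Set.range π ∪ Set.range j) =
      Subring.closure (Set.range π ∪ Set.range (fun z : R_Z => j (πE z))) := by
  set S := Subring.closure (Set.range π ∪ Set.range (fun z : R_Z => j (πE z)))
  have hbase : ∀ z, j (πE z) ∈ S := fun z => Subring.subset_closure (Or.inr ⟨z, rfl⟩)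
  have hone : j 1 ∈ S := by simpa using hbase 1
  have hjS : S.toAddSubgroup.comap j = ⊤ :=
    AddSubgroup.eq_top_of_mul_pow_mem πE ζ hgenE _ fun z n =>
      map_mul_pow_mem_of_mul_eq_neg j ζ hrule S hone (hbase z) n
  refine le_antisymm (Subring.closure_le.mpr ?_) (Subring.closure_mono ?_)
  · rintro _ (⟨x, rfl⟩ | ⟨e, rfl⟩)
    · exact Subring.subset_closure (Or.inl ⟨x, rfl⟩)
    · exact (AddSubgroup.mem_comap.mp (hjS ▸ AddSubgroup.mem_top e) :)
  · rintro _ (⟨x, rfl⟩ | ⟨z, rfl⟩)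
    · exact Or.inl ⟨x, rfl⟩
    · exact Or.inr ⟨πE z, rfl⟩
end

section
/- The subring of R_W generated by π^*(R_X) ∪ j_*(R_E) equals the subring of R_W generated by π^*(R_X) ∪ {j_*(π_E^*(z)) : z ∈ 𝒵}. -/
/-!
Since `R_E` is generated by `π_E^*(R_Z)` and `ζ`, it is additively spanned by the monomials
`π_E^*(y) ζ^m`. The multiplication rule gives `j_*(γ ζ^m) = (-j_*(1))^m j_*(γ)`, so it suffices
to reach each `j_*(π_E^*(y))`; writing `y = Σ i^*(x) z` and using the compatibility rule,
`j_*(π_E^*(i^*(x) z)) = π^*(x) j_*(π_E^*(z))`.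
-/

open Set

theorem Subring.closure_range_union_singleton_le {A B : Type*} [CommRing A] [CommRing B]
    (f : A →+* B) (ζ : B) :
    (Subring.closure (range f ∪ {ζ})).toAddSubgroup ≤
      AddSubgroup.closure (range fun p : A × ℕ => f p.1 * ζ ^ p.2) := by
  intro e he
  refine AddSubgroup.closure_mono ?_ (Subring.mem_closure_iff.1 he)
  intro b hb
  induction hb using Submonoid.closure_induction with
  | mem b hb =>
    rcases hb with ⟨a, rfl⟩ | rfl
    · exact ⟨(a, 0), by simp⟩
    · exact ⟨(1, 1), by simp⟩
  | one => exact ⟨(1, 0), by simp⟩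
  | mul _ _ _ _ hb hc =>
    obtain ⟨⟨a, m⟩, rfl⟩ := hb
    obtain ⟨⟨c, n⟩, rfl⟩ := hc
    exact ⟨(a * c, m + n), by simp only [map_mul, pow_add]; ring⟩

section Blowup

variable {R_X R_Z R_E R_W : Type*} [CommRing R_X] [CommRing R_Z] [CommRing R_E] [CommRing R_W]
  {π : R_X →+* R_W} {πE : R_Z →+* R_E} {i : R_X →+* R_Z} {j : R_E →+ R_W} {ζ : R_E}

theorem map_mul_pow_of_mul_rule (hrule : ∀ γ δ : R_E, j γ * j δ = -j (γ * δ * ζ))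
    (γ : R_E) (m : ℕ) : j (γ * ζ ^ m) = (-j 1) ^ m * j γ := by
  induction m with
  | zero => simp
  | succ m ih =>
    have hstep : j (γ * ζ ^ m * ζ) = -(j (γ * ζ ^ m) * j 1) := by
      rw [hrule, mul_one, neg_neg]
    rw [pow_succ, ← mul_assoc, hstep, ih]
    ring

theorem map_mem_of_mem_addSubmonoid_closure {S : Subring R_W} {𝒵 : Set R_Z}
    (hcompat : ∀ (α : R_X) (γ : R_E), π α * j γ = j (πE (i α) * γ))
    (hπ : range π ⊆ S) (h𝒵 : ∀ z ∈ 𝒵, j (πE z) ∈ S) {y : R_Z}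
    (hy : y ∈ AddSubmonoid.closure {w : R_Z | ∃ x : R_X, ∃ z ∈ 𝒵, w = i x * z}) :
    j (πE y) ∈ S := by
  induction hy using AddSubmonoid.closure_induction with
  | mem w hw =>
    obtain ⟨x, z, hz, rfl⟩ := hw
    rw [map_mul, ← hcompat]
    exact mul_mem (hπ ⟨x, rfl⟩) (h𝒵 z hz)
  | zero => simp
  | add _ _ _ _ ha hb => simpa only [map_add] using add_mem ha hb

theorem range_subset_of_map_mem {S : Subring R_W}
    (hrule : ∀ γ δ : R_E, j γ * j δ = -j (γ * δ * ζ))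
    (hgenE : Subring.closure (range πE ∪ {ζ}) = ⊤) (hS : ∀ y : R_Z, j (πE y) ∈ S) :
    range j ⊆ S := by
  rintro _ ⟨γ, rfl⟩
  have hmonomial : ∀ p : R_Z × ℕ, j (πE p.1 * ζ ^ p.2) ∈ S := fun ⟨y, m⟩ => by
    rw [map_mul_pow_of_mul_rule hrule]
    have hj1 : j 1 ∈ S := by simpa using hS 1
    exact mul_mem (pow_mem (neg_mem hj1) m) (hS y)
  have hspan := Subring.closure_range_union_singleton_le πE ζ (by rw [hgenE]; trivial : γ ∈ _)
  exact (AddSubgroup.closure_le (K := S.toAddSubgroup.comap j)).2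
    (range_subset_iff.2 hmonomial) hspan

end Blowup

/-- With the blow-up multiplication rule, the compatibility rule
`π^*(α)·j_*(γ) = j_*(π_E^*(i^*(α))·γ)`, `R_E` generated as a ring by `π_E^*(R_Z)` and `ζ`,
and `𝒵 ⊆ R_Z` such that every element of `R_Z` is a finite sum of elements `i^*(x)·z`
with `x ∈ R_X`, `z ∈ 𝒵`, the subring of `R_W` generated by `π^*(R_X) ∪ j_*(R_E)` equals
the subring generated by `π^*(R_X) ∪ {j_*(π_E^*(z)) : z ∈ 𝒵}`. -/
theorem subring_gen_economical
    {R_X R_Z R_E R_W : Type*} [CommRing R_X] [CommRing R_Z] [CommRing R_E] [CommRing R_W]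
    (π : R_X →+* R_W) (πE : R_Z →+* R_E) (i : R_X →+* R_Z)
    (j : R_E →+ R_W) (ζ : R_E)
    (hrule : ∀ γ δ : R_E, j γ * j δ = -j (γ * δ * ζ))
    (hcompat : ∀ (α : R_X) (γ : R_E), π α * j γ = j (πE (i α) * γ))
    (hgenE : Subring.closure (Set.range πE ∪ {ζ}) = (⊤ : Subring R_E))
    (𝒵 : Set R_Z)
    (hgenZ : ∀ y : R_Z,
      y ∈ AddSubmonoid.closure {w : R_Z | ∃ x : R_X, ∃ z ∈ 𝒵, w = i x * z}) :
    Subring.closure (Set.range π ∪ Set.range j) =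
      Subring.closure (Set.range π ∪ (fun z : R_Z => j (πE z)) '' 𝒵) := by
  set S := Subring.closure (Set.range π ∪ (fun z : R_Z => j (πE z)) '' 𝒵)
  have hπ : range π ⊆ S := subset_union_left.trans Subring.subset_closure
  have h𝒵 : ∀ z ∈ 𝒵, j (πE z) ∈ S := fun z hz =>
    Subring.subset_closure (Or.inr ⟨z, hz, rfl⟩)
  have hj : range j ⊆ S := range_subset_of_map_mem hrule hgenE fun y =>
    map_mem_of_mem_addSubmonoid_closure hcompat hπ h𝒵 (hgenZ y)
  refine le_antisymm (Subring.closure_le.2 (union_subset hπ hj)) (Subring.closure_mono ?_)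
  exact union_subset_union_right _ (by rintro _ ⟨z, -, rfl⟩; exact ⟨πE z, rfl⟩)
end

section
/- The saturation of L in ℤⁿ equals L + ℤ·w; that is, the saturated lattice is generated by v₁,…,v_k together with w = (v₁+⋯+v_k)/2, and L has index 2 in its saturation. -/
/-!
If `m • x ∈ L` with `m ≠ 0`, Cramer's rule makes `m` divide every maximal minor times every
coefficient of `m • x`; since the minors generate the ideal `(2)`, `m` divides twice each
coefficient, so `2 • x ∈ L`. Reducing the coefficients of `2 • x` mod 2 gives
`2 • (x - l) = ∑ i ∈ T, v i` with `l ∈ L`. If `T` were neither empty nor everything, halving the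
partial sums over `T` and over its complement in one column each would make every maximal minor
divisible by `4`; so `x ∈ L` or `x - l = w`. Linear independence keeps `w` out of `L`, while
`2 • w ∈ L`, so `L` has index `2` in `L + ℤ w`.
-/

open Matrix Finset Submodule

section Determinant

variable {R ι : Type*} [CommRing R] [Fintype ι] [DecidableEq ι]

theorem Matrix.det_eq_mul_det_updateRow_of_sum_eq_smul (A : Matrix ι ι R) {T : Finset ι}
    {i : ι} (hi : i ∈ T) {d : R} {y : ι → R} (h : ∑ j ∈ T, A j = d • y) :
    A.det = d * (A.updateRow i y).det := by
  have hc : ∑ j, (if j ∈ T then (1 : R) else 0) • A j = d • y := by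
    simp only [ite_smul, one_smul, zero_smul]
    exact (sum_ite_mem _ _ _).trans (by rw [univ_inter, h])
  have hsum := det_updateRow_sum A i (fun j => if j ∈ T then 1 else 0)
  rw [hc, det_updateRow_smul, if_pos hi, one_smul] at hsum
  exact hsum.symm

theorem Matrix.mul_dvd_det_of_sum_eq_smul (A : Matrix ι ι R) {T : Finset ι} {i₀ i₁ : ι}
    (h₀ : i₀ ∈ T) (h₁ : i₁ ∉ T) {d e : R} {y z : ι → R} (hT : ∑ j ∈ T, A j = d • y)
    (hTc : ∑ j ∈ Tᶜ, A j = e • z) : d * e ∣ A.det := by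
  set B := A.updateRow i₀ y
  have hB : ∑ j ∈ Tᶜ, B j = e • z := by
    rw [← hTc]
    refine sum_congr rfl fun j hj => updateRow_ne ?_
    rintro rfl
    exact mem_compl.mp hj h₀
  rw [A.det_eq_mul_det_updateRow_of_sum_eq_smul h₀ hT,
    B.det_eq_mul_det_updateRow_of_sum_eq_smul (mem_compl.mpr h₁) hB, ← mul_assoc]
  exact dvd_mul_right _ _

theorem Matrix.dvd_det_mul_of_mulVec_eq_smul (A : Matrix ι ι R) {a b : ι → R} {m : R}
    (h : A *ᵥ a = m • b) (i : ι) : m ∣ A.det * a i := by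
  have key : A.det • a = m • (A.adjugate *ᵥ b) := by
    rw [← mulVec_smul, ← h, mulVec_mulVec, adjugate_mul, smul_mulVec, one_mulVec]
  exact ⟨_, congrFun key i⟩

end Determinant

theorem Ideal.mem_span_range_of_forall_dvd {R ι : Type*} [CommRing R] [IsPrincipalIdealRing R]
    (f : ι → R) {g : R} (h : ∀ d, (∀ i, d ∣ f i) → d ∣ g) : g ∈ Ideal.span (Set.range f) := by
  obtain ⟨d, hd⟩ := (Ideal.span (Set.range f)).isPrincipal_iff.mp inferInstance
  rw [hd, Ideal.mem_span_singleton]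
  refine h d fun i => Ideal.mem_span_singleton.mp ?_
  have hi : f i ∈ Ideal.span (Set.range f) := Ideal.subset_span (Set.mem_range_self i)
  rwa [hd] at hi

section Minors

variable {R ι κ : Type*} [CommRing R] [Fintype ι] [DecidableEq ι]

theorem mul_dvd_det_minor_of_sum_eq_smul (v : ι → κ → R) {T : Finset ι} {i₀ i₁ : ι}
    (h₀ : i₀ ∈ T) (h₁ : i₁ ∉ T) {d e : R} {y z : κ → R} (hT : ∑ j ∈ T, v j = d • y)
    (hTc : ∑ j ∈ Tᶜ, v j = e • z) (s : ι ↪ κ) :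
    d * e ∣ (Matrix.of fun i j : ι => v j (s i)).det := by
  rw [← det_transpose]
  refine mul_dvd_det_of_sum_eq_smul _ h₀ h₁ (y := y ∘ s) (z := z ∘ s) ?_ ?_
  · show ∑ j ∈ T, v j ∘ s = d • (y ∘ s)
    ext r; simpa using congrFun hT (s r)
  · show ∑ j ∈ Tᶜ, v j ∘ s = e • (z ∘ s)
    ext r; simpa using congrFun hTc (s r)

theorem dvd_det_minor_mul_of_sum_smul_eq_smul (v : ι → κ → R) {a : ι → R} {m : R} {x : κ → R}
    (h : ∑ i, a i • v i = m • x) (s : ι ↪ κ) (i : ι) :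
    m ∣ (Matrix.of fun i j : ι => v j (s i)).det * a i := by
  refine dvd_det_mul_of_mulVec_eq_smul _ (b := x ∘ s) ?_ i
  ext r
  simpa [mulVec, dotProduct, mul_comm] using congrFun h (s r)

theorem smul_mem_span_of_smul_mem_span [IsDomain R] (v : ι → κ → R) {g : R}
    (hg : g ∈ Ideal.span (Set.range fun s : ι ↪ κ => (Matrix.of fun i j : ι => v j (s i)).det))
    {m : R} (hm : m ≠ 0) {x : κ → R} (hx : m • x ∈ span R (Set.range v)) :
    g • x ∈ span R (Set.range v) := by
  obtain ⟨a, ha⟩ := (mem_span_range_iff_exists_fun R).mp hx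
  have hdvd : ∀ i, m ∣ g * a i := by
    intro i
    have hle : Ideal.span (Set.range fun s : ι ↪ κ => (Matrix.of fun i j : ι => v j (s i)).det)
        ≤ (Ideal.span {m}).colon {a i} := by
      refine Ideal.span_le.mpr ?_
      rintro _ ⟨s, rfl⟩
      rw [SetLike.mem_coe, mem_colon_singleton, smul_eq_mul, Ideal.mem_span_singleton]
      exact dvd_det_minor_mul_of_sum_smul_eq_smul v ha s i
    simpa [mem_colon_singleton, Ideal.mem_span_singleton] using hle hg
  choose b hb using hdvd
  have hgx : g • x = ∑ i, b i • v i := by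
    refine smul_right_injective _ hm ?_
    dsimp only
    rw [smul_comm, ← ha, smul_sum, smul_sum]
    simp only [smul_smul, hb]
  rw [hgx]
  exact sum_mem fun i _ => smul_mem _ _ (subset_span (Set.mem_range_self i))

end Minors

section HalfSums

variable {M ι : Type*} [AddCommGroup M] [Fintype ι]

theorem exists_mem_span_two_smul_sub_eq_sum (v : ι → M) {x : M}
    (hx : (2 : ℤ) • x ∈ span ℤ (Set.range v)) :
    ∃ l ∈ span ℤ (Set.range v), ∃ T : Finset ι, (2 : ℤ) • (x - l) = ∑ i ∈ T, v i := by
  classical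
  obtain ⟨b, hb⟩ := (mem_span_range_iff_exists_fun ℤ).mp hx
  refine ⟨∑ i, (b i / 2) • v i,
    sum_mem fun i _ => smul_mem _ _ (subset_span (Set.mem_range_self i)),
    univ.filter fun i => b i % 2 = 1, ?_⟩
  have hmod : ∀ i, (b i % 2) • v i = if b i % 2 = 1 then v i else 0 := fun i => by
    rcases Int.emod_two_eq (b i) with h | h <;> simp [h]
  rw [sum_filter, smul_sub, ← hb, smul_sum, ← sum_sub_distrib]
  refine sum_congr rfl fun i _ => ?_
  rw [smul_smul, ← sub_smul, ← hmod, ← Int.emod_def]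

theorem half_sum_notMem_span [Nonempty ι] {v : ι → M} (hv : LinearIndependent ℤ v) {w : M}
    (hw : (2 : ℤ) • w = ∑ i, v i) : w ∉ span ℤ (Set.range v) := by
  intro hmem
  obtain ⟨c, hc⟩ := (mem_span_range_iff_exists_fun ℤ).mp hmem
  have hrel : ∑ i, (2 * c i - 1) • v i = 0 := by
    simp only [sub_smul, one_smul, sum_sub_distrib, mul_smul, ← smul_sum, hc, hw, sub_self]
  have := Fintype.linearIndependent_iff.mp hv _ hrel (Classical.arbitrary ι)
  omega

end HalfSums

theorem LinearIndependent.of_intCast {ι κ : Type*} {v : ι → κ → ℤ}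
    (hv : LinearIndependent ℚ fun i j => (v i j : ℚ)) : LinearIndependent ℤ v :=
  (hv.restrict_scalars' ℤ).of_comp ((Int.castAddHom ℚ).toIntLinearMap.compLeft κ)

theorem Submodule.smul_mem_of_mem_sup_span_singleton {R N : Type*} [CommRing R] [AddCommGroup N]
    [Module R N] {L : Submodule R N} {w x : N} {a : R} (haw : a • w ∈ L)
    (hx : x ∈ L ⊔ span R {w}) : a • x ∈ L := by
  obtain ⟨l, hl, _, hc, rfl⟩ := mem_sup.mp hx
  obtain ⟨c, rfl⟩ := mem_span_singleton.mp hc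
  rw [smul_add, smul_comm]
  exact add_mem (smul_mem _ _ hl) (smul_mem _ _ haw)

section IndexTwo

variable {M : Type*} [AddCommGroup M] {L : Submodule ℤ M} {w : M}

theorem Submodule.zsmul_mem_iff_even (hw : w ∉ L) (h2w : (2 : ℤ) • w ∈ L) (c : ℤ) :
    c • w ∈ L ↔ Even c := by
  obtain ⟨q, rfl | rfl⟩ := Int.even_or_odd' c
  · rw [iff_true_intro (even_two_mul q), mul_comm, mul_smul]
    exact iff_true_intro (smul_mem _ q h2w)
  · rw [iff_false_intro (Int.not_even_two_mul_add_one q), add_smul, one_smul, mul_comm, mul_smul,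
      L.add_mem_iff_right (smul_mem _ q h2w)]
    exact iff_false_intro hw

theorem Submodule.relIndex_sup_span_singleton_eq_two (hw : w ∉ L) (h2w : (2 : ℤ) • w ∈ L) :
    L.toAddSubgroup.relIndex (L ⊔ span ℤ {w}).toAddSubgroup = 2 := by
  rw [AddSubgroup.relIndex, AddSubgroup.index_eq_two_iff]
  refine ⟨⟨w, mem_sup_right (mem_span_singleton_self w)⟩, fun ⟨x, hx⟩ => ?_⟩
  obtain ⟨l, hl, _, hc, rfl⟩ := mem_sup.mp hx
  obtain ⟨c, rfl⟩ := mem_span_singleton.mp hc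
  simp only [AddSubgroup.mem_addSubgroupOf, AddSubgroup.coe_add, mem_toAddSubgroup, add_assoc,
    L.add_mem_iff_right hl]
  rw [← add_one_zsmul, zsmul_mem_iff_even hw h2w, zsmul_mem_iff_even hw h2w, Int.even_add_one]
  exact xor_not_left.mpr Iff.rfl

end IndexTwo

theorem mem_sup_span_of_two_smul_mem {ι κ : Type*} [Fintype ι] [DecidableEq ι]
    (v : ι → κ → ℤ) (h4 : ∃ s : ι ↪ κ, ¬(4 : ℤ) ∣ (Matrix.of fun i j : ι => v j (s i)).det)
    {w : κ → ℤ} (hw : (2 : ℤ) • w = ∑ i, v i) {x : κ → ℤ}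
    (hx : (2 : ℤ) • x ∈ span ℤ (Set.range v)) : x ∈ span ℤ (Set.range v) ⊔ span ℤ {w} := by
  obtain ⟨l, hl, T, hT⟩ := exists_mem_span_two_smul_sub_eq_sum v hx
  rw [← add_sub_cancel l x]
  refine add_mem (mem_sup_left hl) ?_
  obtain rfl | ⟨i₀, h₀⟩ := T.eq_empty_or_nonempty
  · rw [sum_empty, ← smul_zero (2 : ℤ)] at hT
    rw [smul_right_injective _ two_ne_zero hT]
    exact zero_mem _
  obtain hTc | ⟨i₁, h₁⟩ := Tᶜ.eq_empty_or_nonempty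
  · rw [(compl_eq_empty_iff T).mp hTc, ← hw] at hT
    rw [smul_right_injective _ two_ne_zero hT]
    exact mem_sup_right (mem_span_singleton_self w)
  have hTc : ∑ j ∈ Tᶜ, v j = (2 : ℤ) • (w - (x - l)) := by
    rw [smul_sub, hT, hw, ← sum_add_sum_compl T v, add_sub_cancel_left]
  obtain ⟨s, hs⟩ := h4
  have h4s := mul_dvd_det_minor_of_sum_eq_smul v h₀ (mem_compl.mp h₁) hT.symm hTc s
  exact absurd h4s (by norm_num [hs])

theorem saturation_eq_span_with_half_sum_general
    (n k : ℕ) (v : Fin k → (Fin n → ℤ))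
    (hli : LinearIndependent ℚ (fun i : Fin k => fun j : Fin n => ((v i j : ℚ))))
    (hgcd : ∀ d : ℤ,
      (∀ s : Fin k ↪ Fin n, d ∣ (Matrix.of fun i j : Fin k => v j (s i)).det) ↔ d ∣ 2)
    (w : Fin n → ℤ) (hw : 2 • w = ∑ i, v i)
    (L : Submodule ℤ (Fin n → ℤ)) (hL : L = Submodule.span ℤ (Set.range v)) :
    {x : Fin n → ℤ | ∃ m : ℤ, 1 ≤ m ∧ m • x ∈ L} =
        ↑(L ⊔ Submodule.span ℤ {w}) ∧
      L.toAddSubgroup.relIndex (L ⊔ Submodule.span ℤ {w}).toAddSubgroup = 2 := by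
  subst hL
  have hw2 : (2 : ℤ) • w = ∑ i, v i := (natCast_zsmul w 2).trans hw
  have h2w : (2 : ℤ) • w ∈ span ℤ (Set.range v) :=
    hw2 ▸ sum_mem fun i _ => subset_span (Set.mem_range_self i)
  have : Nonempty (Fin k) := by
    rcases k with _ | k
    · have := (hgcd 2).mpr dvd_rfl Function.Embedding.ofIsEmpty
      norm_num at this
    · exact ⟨0⟩
  have hwL := half_sum_notMem_span (LinearIndependent.of_intCast hli) hw2
  have h2 := Ideal.mem_span_range_of_forall_dvd _ fun d hd => (hgcd d).mp hd
  have h4 : ∃ s : Fin k ↪ Fin n, ¬(4 : ℤ) ∣ (Matrix.of fun i j : Fin k => v j (s i)).det := by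
    by_contra! h
    have := (hgcd 4).mp h
    norm_num at this
  refine ⟨Set.ext fun x => ⟨?_, fun hx => ⟨2, one_le_two,
    smul_mem_of_mem_sup_span_singleton h2w hx⟩⟩, relIndex_sup_span_singleton_eq_two hwL h2w⟩
  rintro ⟨m, hm, hmx⟩
  exact mem_sup_span_of_two_smul_mem v h4 hw2 (smul_mem_span_of_smul_mem_span v h2 (by omega) hmx)

/-- Let `v₁,…,v_k ∈ ℤⁿ` be linearly independent over `ℚ`, let `L` be their
ℤ-span, assume the gcd of all `k×k` minors of the matrix with columns `v₁,…,v_k` is `2`,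
and that `w := (v₁+⋯+v_k)/2 ∈ ℤⁿ`. Then the saturation of `L` in `ℤⁿ`
(`{x : ∃ m ≥ 1, m·x ∈ L}`) equals `L + ℤ·w`, and `L` has index `2` in its saturation. -/
theorem saturation_eq_span_with_half_sum
    (n k : ℕ) (hk : k ≤ n) (v : Fin k → (Fin n → ℤ))
    (hli : LinearIndependent ℚ (fun i : Fin k => fun j : Fin n => ((v i j : ℚ))))
    (hgcd : ∀ d : ℤ,
      (∀ s : Fin k ↪ Fin n, d ∣ (Matrix.of fun i j : Fin k => v j (s i)).det) ↔ d ∣ 2)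
    (w : Fin n → ℤ) (hw : 2 • w = ∑ i, v i)
    (L : Submodule ℤ (Fin n → ℤ)) (hL : L = Submodule.span ℤ (Set.range v)) :
    {x : Fin n → ℤ | ∃ m : ℤ, 1 ≤ m ∧ m • x ∈ L} =
        ↑(L ⊔ Submodule.span ℤ {w}) ∧
      L.toAddSubgroup.relIndex (L ⊔ Submodule.span ℤ {w}).toAddSubgroup = 2 :=
  saturation_eq_span_with_half_sum_general n k v hli hgcd w hw L hL
end
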